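/- arXiv:2402.12618 — 8 statements merged into one kernel-verified Lean document; each statement's English description precedes it below -/
import Mathlib

section
/- For the 2-CH spectral matrices L = [[0,1],[1/4 - λm + λ²σρ², 0]] and M = [[u_x/2, -1/(2λ) - u],[-1/(8λ) + u(1/4 + λm - λ²σρ²) - (λ/2)σρ², -u_x/2]], the zero-curvature equation L_t - M_x + [L,M] = 0 holds (for all λ ≠ 0) if and only if (m, ρ) satisfies the 2-component Camassa-Holm system m_t = -u m_x - 2 u_x m + σ ρ ρ_x, ρ_t = -(ρu)_x, together with m = u - u_xx. -/
noncomputable def pdx (F : ℝ → ℝ → ℝ) : ℝ → ℝ → ℝ :=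
  fun x t => deriv (fun x' => F x' t) x

noncomputable def pdt (F : ℝ → ℝ → ℝ) : ℝ → ℝ → ℝ :=
  fun x t => deriv (fun t' => F x t') t

lemma hasDerivAt_sectx {F : ℝ → ℝ → ℝ}
    (hF : ContDiff ℝ (⊤ : ℕ∞) (fun p : ℝ × ℝ => F p.1 p.2)) (x t : ℝ) :
    HasDerivAt (fun x' => F x' t) (pdx F x t) x := by
  have h : DifferentiableAt ℝ (fun x' => F x' t) x := by
    have h1 : DifferentiableAt ℝ (fun p : ℝ × ℝ => F p.1 p.2) (x, t) :=
      (hF.differentiable (by simp)) (x, t)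
    have h2 : DifferentiableAt ℝ (fun x' : ℝ => ((x', t) : ℝ × ℝ)) x :=
      differentiableAt_id.prodMk (differentiableAt_const t)
    exact h1.comp x h2
  exact h.hasDerivAt

lemma hasDerivAt_sectt {F : ℝ → ℝ → ℝ}
    (hF : ContDiff ℝ (⊤ : ℕ∞) (fun p : ℝ × ℝ => F p.1 p.2)) (x t : ℝ) :
    HasDerivAt (fun t' => F x t') (pdt F x t) t := by
  have h : DifferentiableAt ℝ (fun t' => F x t') t := by
    have h1 : DifferentiableAt ℝ (fun p : ℝ × ℝ => F p.1 p.2) (x, t) :=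
      (hF.differentiable (by simp)) (x, t)
    have h2 : DifferentiableAt ℝ (fun t' : ℝ => ((x, t') : ℝ × ℝ)) t :=
      (differentiableAt_const x).prodMk differentiableAt_id
    exact h1.comp t h2
  exact h.hasDerivAt

lemma contDiff_pdx {F : ℝ → ℝ → ℝ}
    (hF : ContDiff ℝ (⊤ : ℕ∞) (fun p : ℝ × ℝ => F p.1 p.2)) :
    ContDiff ℝ (⊤ : ℕ∞) (fun p : ℝ × ℝ => pdx F p.1 p.2) := by
  have h1 : ∀ p : ℝ × ℝ, pdx F p.1 p.2
      = fderiv ℝ (fun q : ℝ × ℝ => F q.1 q.2) p ((1 : ℝ), (0 : ℝ)) := by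
    intro p
    have hF' : HasFDerivAt (fun q : ℝ × ℝ => F q.1 q.2)
        (fderiv ℝ (fun q : ℝ × ℝ => F q.1 q.2) p) (p.1, p.2) := by
      simpa using ((hF.differentiable (by simp)) p).hasFDerivAt
    have hc : HasDerivAt (fun x' : ℝ => ((x', p.2) : ℝ × ℝ)) ((1 : ℝ), (0 : ℝ)) p.1 :=
      (hasDerivAt_id p.1).prodMk (hasDerivAt_const p.1 p.2)
    have hd := hF'.comp_hasDerivAt p.1 hc
    simpa [Function.comp_def, pdx, pdt] using hd.deriv
  have h2 : (fun p : ℝ × ℝ => pdx F p.1 p.2)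
      = fun p : ℝ × ℝ => fderiv ℝ (fun q : ℝ × ℝ => F q.1 q.2) p ((1 : ℝ), (0 : ℝ)) :=
    funext h1
  rw [h2]
  exact (hF.fderiv_right (by simp)).clm_apply contDiff_const

lemma contDiff_pdt {F : ℝ → ℝ → ℝ}
    (hF : ContDiff ℝ (⊤ : ℕ∞) (fun p : ℝ × ℝ => F p.1 p.2)) :
    ContDiff ℝ (⊤ : ℕ∞) (fun p : ℝ × ℝ => pdt F p.1 p.2) := by
  have h1 : ∀ p : ℝ × ℝ, pdt F p.1 p.2
      = fderiv ℝ (fun q : ℝ × ℝ => F q.1 q.2) p ((0 : ℝ), (1 : ℝ)) := by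
    intro p
    have hF' : HasFDerivAt (fun q : ℝ × ℝ => F q.1 q.2)
        (fderiv ℝ (fun q : ℝ × ℝ => F q.1 q.2) p) (p.1, p.2) := by
      simpa using ((hF.differentiable (by simp)) p).hasFDerivAt
    have hc : HasDerivAt (fun t' : ℝ => ((p.1, t') : ℝ × ℝ)) ((0 : ℝ), (1 : ℝ)) p.2 :=
      (hasDerivAt_const p.2 p.1).prodMk (hasDerivAt_id p.2)
    have hd := hF'.comp_hasDerivAt p.2 hc
    simpa [Function.comp_def, pdx, pdt] using hd.deriv
  have h2 : (fun p : ℝ × ℝ => pdt F p.1 p.2)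
      = fun p : ℝ × ℝ => fderiv ℝ (fun q : ℝ × ℝ => F q.1 q.2) p ((0 : ℝ), (1 : ℝ)) :=
    funext h1
  rw [h2]
  exact (hF.fderiv_right (by simp)).clm_apply contDiff_const
noncomputable def Lmat (m ρ : ℝ → ℝ → ℝ) (sg l x t : ℝ) : Matrix (Fin 2) (Fin 2) ℝ :=
  !![0, 1; 1/4 - l * m x t + l^2 * sg * (ρ x t)^2, 0]

noncomputable def Mmat (u m ρ : ℝ → ℝ → ℝ) (sg l x t : ℝ) : Matrix (Fin 2) (Fin 2) ℝ :=
  !![pdx u x t / 2, -1/(2*l) - u x t;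
     -1/(8*l) + u x t * (1/4 + l * m x t - l^2 * sg * (ρ x t)^2) - l/2 * sg * (ρ x t)^2,
     -(pdx u x t)/2]

lemma keyA (u m ρ : ℝ → ℝ → ℝ) (sg : ℝ)
    (hu : ContDiff ℝ (⊤ : ℕ∞) (fun p : ℝ × ℝ => u p.1 p.2))
    (hρ : ContDiff ℝ (⊤ : ℕ∞) (fun p : ℝ × ℝ => ρ p.1 p.2))
    (hm : ∀ x t, m x t = u x t - pdx (pdx u) x t)
    (l : ℝ) (hl : l ≠ 0) (x t : ℝ) :
    (Matrix.of fun i j => pdt (fun x' t' => Lmat m ρ sg l x' t' i j) x t)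
      - (Matrix.of fun i j => pdx (fun x' t' => Mmat u m ρ sg l x' t' i j) x t)
      + (Lmat m ρ sg l x t * Mmat u m ρ sg l x t - Mmat u m ρ sg l x t * Lmat m ρ sg l x t)
    = !![0, 0;
        l * (-(pdt m x t) - u x t * pdx m x t - 2 * pdx u x t * m x t + sg * ρ x t * pdx ρ x t)
          + l^2 * (2 * sg * ρ x t * (pdt ρ x t + u x t * pdx ρ x t + pdx u x t * ρ x t)), 0] := by
  have hmC : ContDiff ℝ (⊤ : ℕ∞) (fun p : ℝ × ℝ => m p.1 p.2) := by
    have h : (fun p : ℝ × ℝ => m p.1 p.2)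
        = fun p : ℝ × ℝ => u p.1 p.2 - pdx (pdx u) p.1 p.2 := funext fun p => hm p.1 p.2
    rw [h]; exact hu.sub (contDiff_pdx (contDiff_pdx hu))
  have hux := contDiff_pdx hu
  have hmt := hasDerivAt_sectt hmC x t
  have hrt := hasDerivAt_sectt hρ x t
  have hux1 := hasDerivAt_sectx hu x t
  have huxx := hasDerivAt_sectx hux x t
  have hmx := hasDerivAt_sectx hmC x t
  have hrx := hasDerivAt_sectx hρ x t
  -- derivative computations
  have eQ : pdt (fun x' t' => 1 / 4 - l * m x' t' + l ^ 2 * sg * ρ x' t' ^ 2) x t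
      = -(l * pdt m x t) + l ^ 2 * sg * (2 * ρ x t * pdt ρ x t) := by
    have h : HasDerivAt (fun t' => 1 / 4 - l * m x t' + l ^ 2 * sg * ρ x t' ^ 2)
        (-(l * pdt m x t) + l ^ 2 * sg * (2 * ρ x t * pdt ρ x t)) t := by
      have := ((hasDerivAt_const t ((1:ℝ) / 4)).sub (hmt.const_mul l)).add
        ((hrt.pow 2).const_mul (l ^ 2 * sg))
      exact this.congr_deriv (by push_cast; ring)
    exact h.deriv
  have eM00 : pdx (fun x' t' => pdx u x' t' / 2) x t = pdx (pdx u) x t / 2 :=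
    (huxx.div_const 2).deriv
  have eM01 : pdx (fun x' t' => -1 / (2 * l) - u x' t') x t = -(pdx u x t) := by
    have h : HasDerivAt (fun x' => -1 / (2 * l) - u x' t) (-(pdx u x t)) x := by
      have := (hasDerivAt_const x (-1 / (2 * l))).sub hux1
      exact this.congr_deriv (by ring)
    exact h.deriv
  have eM11 : pdx (fun x' t' => -(pdx u x' t') / 2) x t = -(pdx (pdx u) x t) / 2 :=
    ((huxx.neg).div_const 2).deriv
  have eC : pdx (fun x' t' => -1 / (8 * l)
        + u x' t' * (1 / 4 + l * m x' t' - l ^ 2 * sg * ρ x' t' ^ 2)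
        - l / 2 * sg * ρ x' t' ^ 2) x t
      = pdx u x t * (1 / 4 + l * m x t - l ^ 2 * sg * ρ x t ^ 2)
        + u x t * (l * pdx m x t - l ^ 2 * sg * (2 * ρ x t * pdx ρ x t))
        - l / 2 * sg * (2 * ρ x t * pdx ρ x t) := by
    have h : HasDerivAt (fun x' => -1 / (8 * l)
          + u x' t * (1 / 4 + l * m x' t - l ^ 2 * sg * ρ x' t ^ 2)
          - l / 2 * sg * ρ x' t ^ 2)
        (pdx u x t * (1 / 4 + l * m x t - l ^ 2 * sg * ρ x t ^ 2)
          + u x t * (l * pdx m x t - l ^ 2 * sg * (2 * ρ x t * pdx ρ x t))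
          - l / 2 * sg * (2 * ρ x t * pdx ρ x t)) x := by
      have := ((hasDerivAt_const x (-1 / (8 * l))).add
          (hux1.mul (((hasDerivAt_const x ((1:ℝ) / 4)).add (hmx.const_mul l)).sub
            ((hrx.pow 2).const_mul (l ^ 2 * sg))))).sub
        ((hrx.pow 2).const_mul (l / 2 * sg))
      exact this.congr_deriv (by simp only [Pi.add_apply, Pi.sub_apply, Pi.pow_apply]; push_cast; ring)
    exact h.deriv
  have hmxt := hm x t
  ext i j
  fin_cases i <;> fin_cases j <;>
    simp only [Lmat, Mmat, Matrix.of_apply, Matrix.sub_apply, Matrix.add_apply,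
      Matrix.mul_apply, Fin.sum_univ_two, Fin.isValue, Fin.mk_zero, Fin.mk_one,
      Matrix.cons_val', Matrix.cons_val_zero,
      Matrix.cons_val_one, Matrix.head_cons, Matrix.empty_val', Matrix.cons_val_fin_one,
      Matrix.head_fin_const]
  · rw [eM00]
    have h0 : pdt (fun x' t' => (0:ℝ)) x t = 0 := by simp [pdt]
    rw [h0, hmxt]
    field_simp
    ring
  · rw [eM01]
    have h0 : pdt (fun x' t' => (1:ℝ)) x t = 0 := by simp [pdt]
    rw [h0]
    ring
  · rw [eQ, eC]
    field_simp
    ring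
  · rw [eM11]
    have h0 : pdt (fun x' t' => (0:ℝ)) x t = 0 := by simp [pdt]
    rw [h0, hmxt]
    field_simp
    ring
theorem stmt_2 (u m ρ : ℝ → ℝ → ℝ) (sg : ℝ) (hsg : sg = 1 ∨ sg = -1)
    (hu : ContDiff ℝ (⊤ : ℕ∞) (fun p : ℝ × ℝ => u p.1 p.2))
    (hρ : ContDiff ℝ (⊤ : ℕ∞) (fun p : ℝ × ℝ => ρ p.1 p.2))
    (hm : ∀ x t, m x t = u x t - pdx (pdx u) x t) :
    (∀ l : ℝ, l ≠ 0 → ∀ x t : ℝ,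
      (Matrix.of fun i j => pdt (fun x' t' => Lmat m ρ sg l x' t' i j) x t)
        - (Matrix.of fun i j => pdx (fun x' t' => Mmat u m ρ sg l x' t' i j) x t)
        + (Lmat m ρ sg l x t * Mmat u m ρ sg l x t
            - Mmat u m ρ sg l x t * Lmat m ρ sg l x t) = 0)
    ↔ (∀ x t : ℝ,
        pdt m x t = -(u x t) * pdx m x t - 2 * pdx u x t * m x t + sg * ρ x t * pdx ρ x t
        ∧ pdt ρ x t = -(pdx (fun x' t' => ρ x' t' * u x' t') x t)) := by
  have hprod : ∀ x t : ℝ, pdx (fun x' t' => ρ x' t' * u x' t') x t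
      = pdx ρ x t * u x t + ρ x t * pdx u x t := fun x t =>
    ((hasDerivAt_sectx hρ x t).mul (hasDerivAt_sectx hu x t)).deriv
  constructor
  · intro H
    have key : ∀ x t : ℝ,
        (-(pdt m x t) - u x t * pdx m x t - 2 * pdx u x t * m x t
            + sg * ρ x t * pdx ρ x t = 0)
        ∧ ρ x t * (pdt ρ x t + u x t * pdx ρ x t + pdx u x t * ρ x t) = 0 := by
      intro x t
      have e1 := (keyA u m ρ sg hu hρ hm 1 one_ne_zero x t).symm.trans (H 1 one_ne_zero x t)
      have e2 := (keyA u m ρ sg hu hρ hm (-1) (by norm_num) x t).symm.trans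
        (H (-1) (by norm_num) x t)
      have h1 : (1:ℝ) * (-(pdt m x t) - u x t * pdx m x t - 2 * pdx u x t * m x t
            + sg * ρ x t * pdx ρ x t)
          + (1:ℝ)^2 * (2 * sg * ρ x t * (pdt ρ x t + u x t * pdx ρ x t + pdx u x t * ρ x t))
          = 0 := by
        have := congrFun (congrFun e1 1) 0
        simpa using this
      have h2 : (-1:ℝ) * (-(pdt m x t) - u x t * pdx m x t - 2 * pdx u x t * m x t
            + sg * ρ x t * pdx ρ x t)
          + (-1:ℝ)^2 * (2 * sg * ρ x t * (pdt ρ x t + u x t * pdx ρ x t + pdx u x t * ρ x t))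
          = 0 := by
        have := congrFun (congrFun e2 1) 0
        simpa using this
      rcases hsg with h | h <;> subst h <;> constructor <;> nlinarith [h1, h2]
    intro x t
    constructor
    · have := (key x t).1
      linarith
    · -- continuity argument
      set S : Set (ℝ × ℝ) := {p : ℝ × ℝ | ρ p.1 p.2 ≠ 0} with hS
      set g : ℝ × ℝ → ℝ := fun p => pdt ρ p.1 p.2 + u p.1 p.2 * pdx ρ p.1 p.2
          + pdx u p.1 p.2 * ρ p.1 p.2 with hgdef
      have hgc : Continuous g :=
        ((contDiff_pdt hρ).continuous.add
          ((hu.continuous).mul (contDiff_pdx hρ).continuous)).add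
          ((contDiff_pdx hu).continuous.mul hρ.continuous)
      have hSg : Set.EqOn g 0 S := by
        intro q hq
        have hk := (key q.1 q.2).2
        have hρq : ρ q.1 q.2 ≠ 0 := hq
        have : pdt ρ q.1 q.2 + u q.1 q.2 * pdx ρ q.1 q.2 + pdx u q.1 q.2 * ρ q.1 q.2 = 0 :=
          by rcases mul_eq_zero.mp hk with h | h
             · exact absurd h hρq
             · exact h
        simpa [hgdef] using this
      have hgzero : g (x, t) = 0 := by
        by_cases hcl : (x, t) ∈ closure S
        · exact (hSg.closure hgc continuous_const) hcl
        · have hopen : IsOpen (closure S)ᶜ := isClosed_closure.isOpen_compl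
          have hmem : (closure S)ᶜ ∈ nhds ((x, t) : ℝ × ℝ) := hopen.mem_nhds hcl
          have hzero : ∀ q ∈ (closure S)ᶜ, ρ q.1 q.2 = 0 := by
            intro q hq
            by_contra h
            exact hq (subset_closure h)
          have h0 : ∀ᶠ q in nhds ((x, t) : ℝ × ℝ), ρ q.1 q.2 = 0 :=
            Filter.eventually_of_mem hmem hzero
          have hρxt : ρ x t = 0 := hzero (x, t) hcl
          have hpdt : pdt ρ x t = 0 := by
            have hc : Filter.Tendsto (fun t' : ℝ => ((x, t') : ℝ × ℝ)) (nhds t)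
                (nhds ((x, t) : ℝ × ℝ)) := by
              exact (Continuous.tendsto (by fun_prop) t)
            have h1 : ∀ᶠ t' in nhds t, ρ x t' = 0 := hc.eventually h0
            have h2 : (fun t' => ρ x t') =ᶠ[nhds t] fun _ => (0:ℝ) := h1
            show deriv (fun t' => ρ x t') t = 0
            rw [h2.deriv_eq, deriv_const]
          have hpdx : pdx ρ x t = 0 := by
            have hc : Filter.Tendsto (fun x' : ℝ => ((x', t) : ℝ × ℝ)) (nhds x)
                (nhds ((x, t) : ℝ × ℝ)) := by
              exact (Continuous.tendsto (by fun_prop) x)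
            have h1 : ∀ᶠ x' in nhds x, ρ x' t = 0 := hc.eventually h0
            have h2 : (fun x' => ρ x' t) =ᶠ[nhds x] fun _ => (0:ℝ) := h1
            show deriv (fun x' => ρ x' t) x = 0
            rw [h2.deriv_eq, deriv_const]
          simp [hgdef, hρxt, hpdt, hpdx]
      have : pdt ρ x t + u x t * pdx ρ x t + pdx u x t * ρ x t = 0 := hgzero
      rw [hprod x t]
      linarith
  · intro H l hl x t
    obtain ⟨h1, h2⟩ := H x t
    rw [keyA u m ρ sg hu hρ hm l hl x t]
    have hE1 : -(pdt m x t) - u x t * pdx m x t - 2 * pdx u x t * m x t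
        + sg * ρ x t * pdx ρ x t = 0 := by rw [h1]; ring
    have hE2 : pdt ρ x t + u x t * pdx ρ x t + pdx u x t * ρ x t = 0 := by
      rw [h2, hprod x t]; ring
    ext i j
    fin_cases i <;> fin_cases j
    · simp
    · simp
    · simp only [Matrix.of_apply, Fin.mk_zero, Fin.mk_one, Fin.isValue, Matrix.cons_val',
        Matrix.cons_val_zero, Matrix.cons_val_one, Matrix.head_cons, Matrix.empty_val',
        Matrix.cons_val_fin_one, Matrix.head_fin_const, Matrix.zero_apply]
      linear_combination l * hE1 + l ^ 2 * 2 * sg * ρ x t * hE2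
    · simp
end

section
/- Applying the Hamiltonian operator B₁ = diag(∂_x - ∂_x³, -σ∂_x) to the vector (λ f ĝ, -2λ²σρ f ĝ)^T and simplifying using the spectral equations f_x = g, g_x = (1/4 - λm + λ²σρ²)f and the adjoint equations f̂_x = -(1/4 - λm + λ²σρ²)ĝ, ĝ_x = -f̂, yields the vector (Ω^m, Ω^ρ) with Ω^m = 4λ²(m - λσρ²)(gĝ - f f̂) - 4λ³σρρ_x f ĝ + 2λ² m_x f ĝ and Ω^ρ = 2λ²ρ(gĝ - f f̂) + 2λ²ρ_x f ĝ. -/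
/-!
Write `F = f ĝ` and `W = g ĝ - f f̂`. The spectral and adjoint equations give `F' = W`,
`W' = 2Q F - 2 g f̂` and `(g f̂)' = -Q W`, where `Q = 1/4 - λm + λ²σρ²`; hence
`W'' = 2Q' F + 4Q W` and `F - F''' = (1 - 4Q) W - 2Q' F`. Since `1 - 4Q = 4λ(m - λσρ²)` and
`Q' = -λm_x + 2λ²σρρ_x`, multiplying by `λ` gives `Ω^m`; `Ω^ρ` only needs `F' = W` and `σ² = 1`.
-/

section SpectralPair

variable {f g fh gh Q : ℝ → ℝ} {x : ℝ}

theorem hasDerivAt_mul_adjoint (hf : HasDerivAt f (g x) x) (hgh : HasDerivAt gh (-fh x) x) :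
    HasDerivAt (fun y => f y * gh y) (g x * gh x - f x * fh x) x :=
  (hf.fun_mul hgh).congr_deriv (by ring)

theorem hasDerivAt_wronskian (hf : HasDerivAt f (g x) x) (hg : HasDerivAt g (Q x * f x) x)
    (hfh : HasDerivAt fh (-(Q x * gh x)) x) (hgh : HasDerivAt gh (-fh x) x) :
    HasDerivAt (fun y => g y * gh y - f y * fh y) (2 * Q x * f x * gh x - 2 * g x * fh x) x :=
  ((hg.fun_mul hgh).sub (hf.fun_mul hfh)).congr_deriv (by ring)

theorem hasDerivAt_deriv_wronskian {Q' : ℝ} (hQ : HasDerivAt Q Q' x)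
    (hf : HasDerivAt f (g x) x) (hg : HasDerivAt g (Q x * f x) x)
    (hfh : HasDerivAt fh (-(Q x * gh x)) x) (hgh : HasDerivAt gh (-fh x) x) :
    HasDerivAt (fun y => 2 * Q y * f y * gh y - 2 * g y * fh y)
      (2 * Q' * f x * gh x + 4 * Q x * (g x * gh x - f x * fh x)) x :=
  ((((hQ.const_mul 2).fun_mul hf).fun_mul hgh).sub ((hg.const_mul 2).fun_mul hfh)).congr_deriv
    (by ring)

end SpectralPair

theorem deriv_sub_deriv_deriv_deriv {F W V : ℝ → ℝ} {U x : ℝ}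
    (hF : ∀ y, HasDerivAt F (W y) y) (hW : ∀ y, HasDerivAt W (V y) y) (hV : HasDerivAt V U x) :
    deriv F x - deriv (deriv (deriv F)) x = W x - U := by
  have hF' : deriv F = W := funext fun y => (hF y).deriv
  have hW' : deriv W = V := funext fun y => (hW y).deriv
  rw [hF', hW', hV.deriv]

theorem deriv_sub_deriv_deriv_deriv_mul_adjoint {f g fh gh Q Q' : ℝ → ℝ} (c x : ℝ)
    (hQ : ∀ y, HasDerivAt Q (Q' y) y)
    (hf : ∀ y, HasDerivAt f (g y) y) (hg : ∀ y, HasDerivAt g (Q y * f y) y)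
    (hfh : ∀ y, HasDerivAt fh (-(Q y * gh y)) y) (hgh : ∀ y, HasDerivAt gh (-fh y) y) :
    deriv (fun y => c * f y * gh y) x - deriv (deriv (deriv (fun y => c * f y * gh y))) x
      = c * ((1 - 4 * Q x) * (g x * gh x - f x * fh x) - 2 * Q' x * f x * gh x) := by
  have hF : ∀ y, HasDerivAt (fun y => c * f y * gh y) (c * (g y * gh y - f y * fh y)) y :=
    fun y => by simpa only [mul_assoc] using (hasDerivAt_mul_adjoint (hf y) (hgh y)).const_mul c
  rw [deriv_sub_deriv_deriv_deriv hF
    (fun y => (hasDerivAt_wronskian (hf y) (hg y) (hfh y) (hgh y)).const_mul c)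
    ((hasDerivAt_deriv_wronskian (hQ x) (hf x) (hg x) (hfh x) (hgh x)).const_mul c)]
  ring

theorem stmt_5 (f g fh gh m ρ : ℝ → ℝ) (l sg : ℝ) (hsg : sg^2 = 1)
    (hmdiff : Differentiable ℝ m) (hρdiff : Differentiable ℝ ρ)
    (hf : ∀ x, HasDerivAt f (g x) x)
    (hg : ∀ x, HasDerivAt g ((1/4 - l * m x + l^2 * sg * (ρ x)^2) * f x) x)
    (hfh : ∀ x, HasDerivAt fh (-((1/4 - l * m x + l^2 * sg * (ρ x)^2) * gh x)) x)
    (hgh : ∀ x, HasDerivAt gh (-fh x) x) :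
    ∀ x : ℝ,
      (deriv (fun y => l * f y * gh y) x
        - deriv (deriv (deriv (fun y => l * f y * gh y))) x
        = 4*l^2*(m x - l*sg*(ρ x)^2)*(g x * gh x - f x * fh x)
          - 4*l^3*sg*ρ x*(deriv ρ x)*f x*gh x + 2*l^2*(deriv m x)*f x*gh x)
      ∧ (-sg * deriv (fun y => -2*l^2*sg*ρ y*f y*gh y) x
        = 2*l^2*ρ x*(g x * gh x - f x * fh x) + 2*l^2*(deriv ρ x)*f x*gh x) := by
  have hQ : ∀ y, HasDerivAt (fun y => 1/4 - l * m y + l^2 * sg * (ρ y)^2)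
      (-l * deriv m y + 2 * l^2 * sg * ρ y * deriv ρ y) y := fun y =>
    ((((hmdiff y).hasDerivAt.const_mul l).const_sub _).add
      (((hρdiff y).hasDerivAt.pow 2).const_mul _)).congr_deriv (by ring)
  intro x
  constructor
  · rw [deriv_sub_deriv_deriv_deriv_mul_adjoint l x hQ hf hg hfh hgh]
    ring
  · have hρF : HasDerivAt (fun y => -2*l^2*sg*ρ y*f y*gh y)
        (-2*l^2*sg*(deriv ρ x * f x * gh x + ρ x * (g x * gh x - f x * fh x))) x :=
      ((((hρdiff x).hasDerivAt.const_mul _).fun_mul (hf x)).fun_mul (hgh x)).congr_deriv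
        (by ring)
    rw [hρF.deriv]
    linear_combination (2*l^2*(deriv ρ x * f x * gh x + ρ x*(g x*gh x - f x*fh x))) * hsg
end

section
/- Under the same hypotheses, applying the second Hamiltonian operator B₂ = [[-m∂_x - ∂_x m, -ρ∂_x],[-∂_x ρ, 0]] to the vector (λ f ĝ, -2λ²σρ f ĝ)^T and simplifying with the spectral and adjoint spectral equations gives exactly -1/(2λ) times the vector (Ω^m, Ω^ρ) obtained from B₁. -/
theorem stmt_6 (f g fh gh m ρ : ℝ → ℝ) (l sg : ℝ) (hl : l ≠ 0) (hsg : sg^2 = 1)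
    (hmdiff : Differentiable ℝ m) (hρdiff : Differentiable ℝ ρ)
    (hf : ∀ x, HasDerivAt f (g x) x)
    (hg : ∀ x, HasDerivAt g ((1/4 - l * m x + l^2 * sg * (ρ x)^2) * f x) x)
    (hfh : ∀ x, HasDerivAt fh (-((1/4 - l * m x + l^2 * sg * (ρ x)^2) * gh x)) x)
    (hgh : ∀ x, HasDerivAt gh (-fh x) x) :
    ∀ x : ℝ,
      (-(m x) * deriv (fun y => l * f y * gh y) x
          - deriv (fun y => m y * (l * f y * gh y)) x
          - ρ x * deriv (fun y => -2*l^2*sg*ρ y*f y*gh y) x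
        = -1/(2*l) * (4*l^2*(m x - l*sg*(ρ x)^2)*(g x * gh x - f x * fh x)
            - 4*l^3*sg*ρ x*(deriv ρ x)*f x*gh x + 2*l^2*(deriv m x)*f x*gh x))
      ∧ (-(deriv (fun y => ρ y * (l * f y * gh y)) x)
        = -1/(2*l) * (2*l^2*ρ x*(g x * gh x - f x * fh x)
            + 2*l^2*(deriv ρ x)*f x*gh x)) := by
  intro x
  have hm : HasDerivAt m (deriv m x) x := (hmdiff x).hasDerivAt
  have hρ : HasDerivAt ρ (deriv ρ x) x := (hρdiff x).hasDerivAt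
  have h1 : HasDerivAt (fun y => l * f y * gh y)
      ((l * g x) * gh x + (l * f x) * (-fh x)) x :=
    (((hf x).const_mul l).mul (hgh x))
  have h2 : HasDerivAt (fun y => m y * (l * f y * gh y))
      (deriv m x * (l * f x * gh x) + m x * ((l * g x) * gh x + (l * f x) * (-fh x))) x :=
    hm.mul h1
  have h3 : HasDerivAt (fun y => -2*l^2*sg*ρ y*f y*gh y)
      (((-2*l^2*sg * deriv ρ x) * f x + (-2*l^2*sg*ρ x) * g x) * gh x
        + (-2*l^2*sg*ρ x*f x) * (-fh x)) x :=
    (((hρ.const_mul (-2*l^2*sg)).mul (hf x)).mul (hgh x))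
  have h4 : HasDerivAt (fun y => ρ y * (l * f y * gh y))
      (deriv ρ x * (l * f x * gh x) + ρ x * ((l * g x) * gh x + (l * f x) * (-fh x))) x :=
    hρ.mul h1
  rw [h1.deriv, h2.deriv, h3.deriv, h4.deriv]
  constructor <;> field_simp <;> ring
end

section
/- The two pseudo-potential equations p_x = -λ³(m - 2λσρ²)f² and p_t = λ³u(m - 2λσρ²)f² + (λ/8)(1 - 4λ²σρ²)f² - (λ/2)g² are compatible (i.e. ∂_t(p_x) = ∂_x(p_t)) whenever (u, m, ρ) solves the 2-CH equation and (f,g) solves the associated linear spectral problem. -/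
lemma hasDerivAt_pdx (F : ℝ → ℝ → ℝ) (hF : ContDiff ℝ (⊤ : ℕ∞) (fun p : ℝ × ℝ => F p.1 p.2))
    (x t : ℝ) : HasDerivAt (fun x' => F x' t) (pdx F x t) x := by
  have h1 : DifferentiableAt ℝ (fun x' : ℝ => (x', t)) x :=
    differentiableAt_id.prodMk (differentiableAt_const t)
  have := ((hF.differentiable (by simp) (x, t)).comp x h1)
  exact this.hasDerivAt

lemma hasDerivAt_pdt (F : ℝ → ℝ → ℝ) (hF : ContDiff ℝ (⊤ : ℕ∞) (fun p : ℝ × ℝ => F p.1 p.2))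
    (x t : ℝ) : HasDerivAt (fun t' => F x t') (pdt F x t) t := by
  have h1 : DifferentiableAt ℝ (fun t' : ℝ => (x, t')) t :=
    (differentiableAt_const x).prodMk differentiableAt_id
  have := ((hF.differentiable (by simp) (x, t)).comp t h1)
  exact this.hasDerivAt

lemma pdx_contDiff (F : ℝ → ℝ → ℝ) (hF : ContDiff ℝ (⊤ : ℕ∞) (fun p : ℝ × ℝ => F p.1 p.2)) :
    ContDiff ℝ (⊤ : ℕ∞) (fun p : ℝ × ℝ => pdx F p.1 p.2) := by
  have key : ∀ p : ℝ × ℝ, pdx F p.1 p.2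
      = fderiv ℝ (fun q : ℝ × ℝ => F q.1 q.2) p (1, 0) := by
    rintro ⟨x, t⟩
    have h : HasDerivAt (fun x' => F x' t)
        (fderiv ℝ (fun q : ℝ × ℝ => F q.1 q.2) (x, t) ((1 : ℝ), (0 : ℝ))) x :=
      (by have hd := (hF.differentiable (by simp) (x, t)).hasFDerivAt
          exact hd.comp_hasDerivAt (f := fun x' : ℝ => (x', t)) x
            ((hasDerivAt_id x).prodMk (hasDerivAt_const x t)))
    exact h.deriv
  have hsm : ContDiff ℝ (⊤ : ℕ∞) (fun p : ℝ × ℝ => fderiv ℝ (fun q : ℝ × ℝ => F q.1 q.2) p (1, 0)) :=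
    (hF.fderiv_right (m := (⊤ : ℕ∞)) (by simp)).clm_apply contDiff_const
  have heq : (fun p : ℝ × ℝ => pdx F p.1 p.2)
      = fun p : ℝ × ℝ => fderiv ℝ (fun q : ℝ × ℝ => F q.1 q.2) p (1, 0) := funext key
  rw [heq]; exact hsm

theorem stmt_10 (u m ρ f g : ℝ → ℝ → ℝ) (l sg : ℝ) (hl : l ≠ 0)
    (hsg : sg = 1 ∨ sg = -1)
    (hu : ContDiff ℝ (⊤ : ℕ∞) (fun p : ℝ × ℝ => u p.1 p.2))
    (hρ : ContDiff ℝ (⊤ : ℕ∞) (fun p : ℝ × ℝ => ρ p.1 p.2))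
    (hfs : ContDiff ℝ (⊤ : ℕ∞) (fun p : ℝ × ℝ => f p.1 p.2))
    (hgs : ContDiff ℝ (⊤ : ℕ∞) (fun p : ℝ × ℝ => g p.1 p.2))
    (hm : ∀ x t, m x t = u x t - pdx (pdx u) x t)
    (hch1 : ∀ x t, pdt m x t
      = -(u x t) * pdx m x t - 2 * pdx u x t * m x t + sg * ρ x t * pdx ρ x t)
    (hch2 : ∀ x t, pdt ρ x t = -(pdx (fun x' t' => ρ x' t' * u x' t') x t))
    (hfx : ∀ x t, pdx f x t = g x t)
    (hgx : ∀ x t, pdx g x t = (1/4 - l * m x t + l^2 * sg * (ρ x t)^2) * f x t)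
    (hft : ∀ x t, pdt f x t = pdx u x t / 2 * f x t + (-1/(2*l) - u x t) * g x t)
    (hgt : ∀ x t, pdt g x t
      = (-1/(8*l) + u x t * (1/4 + l * m x t - l^2 * sg * (ρ x t)^2)
          - l/2 * sg * (ρ x t)^2) * f x t - pdx u x t / 2 * g x t) :
    ∀ x t : ℝ,
      pdt (fun x' t' => -l^3 * (m x' t' - 2*l*sg*(ρ x' t')^2) * (f x' t')^2) x t
      = pdx (fun x' t' => l^3 * u x' t' * (m x' t' - 2*l*sg*(ρ x' t')^2) * (f x' t')^2
          + l/8 * (1 - 4*l^2*sg*(ρ x' t')^2) * (f x' t')^2 - l/2 * (g x' t')^2) x t := by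
  have hms : ContDiff ℝ (⊤ : ℕ∞) (fun p : ℝ × ℝ => m p.1 p.2) := by
    have heq : (fun p : ℝ × ℝ => m p.1 p.2)
        = fun p : ℝ × ℝ => u p.1 p.2 - pdx (pdx u) p.1 p.2 :=
      funext fun p => hm p.1 p.2
    rw [heq]
    exact hu.sub (pdx_contDiff _ (pdx_contDiff _ hu))
  intro x t
  have Hmt := hasDerivAt_pdt m hms x t
  have Hrt := hasDerivAt_pdt ρ hρ x t
  have Hft := hasDerivAt_pdt f hfs x t
  have Hux := hasDerivAt_pdx u hu x t
  have Hmx := hasDerivAt_pdx m hms x t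
  have Hrx := hasDerivAt_pdx ρ hρ x t
  have Hfx := hasDerivAt_pdx f hfs x t
  have Hgx := hasDerivAt_pdx g hgs x t
  have hru : pdx (fun x' t' => ρ x' t' * u x' t') x t
      = pdx ρ x t * u x t + ρ x t * pdx u x t := (Hrx.mul Hux).deriv
  have H1 :=
    (((Hmt.sub ((Hrt.pow 2).const_mul (2*l*sg))).const_mul (-l^3)).mul (Hft.pow 2))
  have H2 :=
    ((((Hux.const_mul (l^3)).mul (Hmx.sub ((Hrx.pow 2).const_mul (2*l*sg)))).mul
        (Hfx.pow 2)).add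
      (((((Hrx.pow 2).const_mul (4*l^2*sg)).const_sub 1).const_mul (l/8)).mul (Hfx.pow 2))).sub
      ((Hgx.pow 2).const_mul (l/2))
  refine Eq.trans H1.deriv (Eq.trans ?_ H2.deriv.symm)
  rw [hch1 x t, hch2 x t, hru, hft x t, hfx x t, hgx x t]
  simp only [Pi.sub_apply, Pi.mul_apply, Pi.add_apply, Pi.pow_apply]
  field_simp
  ring
end

section
/- Let r₀ > 0 and z be constants with 1/4 - z²r₀ > 0, and set k = √(1/4 - z²r₀). Then f(x,t) = exp(k[x + (3-4k²)t/(4z²)]) and g = ((2k-1)/(2z))f solve the 2-mCH spectral problem f_x = f/2 + zg, g_x = -zr₀f - g/2, f_t = (1/(4z²) + r₀/2)f + (1/(2z) + zr₀)g, g_t = (-r₀/(2z) - zr₀²)f + (-1/(4z²) - r₀/2)g, i.e. the linear problem evaluated at the constant solution (q,r,m,n) = (1, r₀, 1, -r₀). -/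
theorem stmt_12 (r0 z k : ℝ) (hz : z ≠ 0) (hr0 : r0 > 0)
    (hpos : 1/4 - z^2 * r0 > 0) (hk : k = Real.sqrt (1/4 - z^2 * r0))
    (f g : ℝ → ℝ → ℝ)
    (hf : f = fun x t => Real.exp (k * (x + (3 - 4*k^2) * t / (4*z^2))))
    (hg : g = fun x t => (2*k - 1)/(2*z) * f x t) :
    ∀ x t : ℝ,
      pdx f x t = f x t / 2 + z * g x t
      ∧ pdx g x t = -z * r0 * f x t - g x t / 2
      ∧ pdt f x t = (1/(4*z^2) + r0/2) * f x t + (1/(2*z) + z*r0) * g x t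
      ∧ pdt g x t = (-r0/(2*z) - z*r0^2) * f x t + (-1/(4*z^2) - r0/2) * g x t := by
  have hk2 : k ^ 2 = 1/4 - z^2 * r0 := by
    rw [hk]; exact Real.sq_sqrt hpos.le
  intro x t
  set c : ℝ := (3 - 4*k^2) / (4*z^2) with hc
  have hdx : ∀ x t : ℝ, HasDerivAt (fun x' => f x' t) (k * f x t) x := by
    intro x t
    have h1 : HasDerivAt (fun x' : ℝ => k * (x' + (3 - 4*k^2) * t / (4*z^2))) k x := by
      simpa using ((hasDerivAt_id x).add_const ((3 - 4*k^2) * t / (4*z^2))).const_mul k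
    simpa [hf, mul_comm] using h1.exp
  have hdt : ∀ x t : ℝ, HasDerivAt (fun t' => f x t') (k * c * f x t) t := by
    intro x t
    have h1 : HasDerivAt (fun t' : ℝ => k * (x + (3 - 4*k^2) * t' / (4*z^2)))
        (k * c) t := by
      have h0 : HasDerivAt (fun t' : ℝ => x + (3 - 4*k^2) * t' / (4*z^2)) c t := by
        have := (hasDerivAt_id t).const_mul ((3 - 4*k^2) / (4*z^2))
        simpa [hc, mul_comm, mul_div_assoc, div_mul_eq_mul_div] using this.const_add x
      simpa [mul_assoc] using h0.const_mul k
    simpa [hf, mul_comm] using h1.exp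
  have hpx : pdx f x t = k * f x t := (hdx x t).deriv
  have hpt : pdt f x t = k * c * f x t := (hdt x t).deriv
  have hpxg : pdx g x t = (2*k - 1)/(2*z) * (k * f x t) := by
    rw [hg]; exact (((hdx x t).const_mul ((2*k - 1)/(2*z)))).deriv
  have hptg : pdt g x t = (2*k - 1)/(2*z) * (k * c * f x t) := by
    rw [hg]; exact (((hdt x t).const_mul ((2*k - 1)/(2*z)))).deriv
  have hz2 : z^2 ≠ 0 := pow_ne_zero 2 hz
  have hr : r0 = (1/4 - k^2)/z^2 := by field_simp; linarith
  refine ⟨?_, ?_, ?_, ?_⟩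
  · rw [hpx, hg]; field_simp; ring
  · rw [hpxg, hg, hr]; field_simp; ring
  · rw [hpt, hg, hc, hr]; field_simp; ring
  · rw [hptg, hg, hc, hr]; field_simp; ring
end

section
/- Let p, f, g satisfy p_x = -z²nf², f_x = f/2 + zmg, g_x = znf - g/2 (the x-parts of the 2-mCH pseudo-potential and spectral problems), and set s = εzf²/(1 - εp) (assuming 1 - εp ≠ 0). Then εzfg/(1-εp) = (s_x + zns² - s)/(2zm) and εzg²/(1-εp) = (s_x + zns² - s)²/(4z²m²s), provided m ≠ 0 and s ≠ 0. -/
theorem stmt_14 (f g p m n s : ℝ → ℝ) (z ε : ℝ) (hz : z ≠ 0)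
    (hp : ∀ x, HasDerivAt p (-z^2 * n x * (f x)^2) x)
    (hf : ∀ x, HasDerivAt f (f x / 2 + z * m x * g x) x)
    (hg : ∀ x, HasDerivAt g (z * n x * f x - g x / 2) x)
    (hs : s = fun x => ε * z * (f x)^2 / (1 - ε * p x))
    (hden : ∀ x, 1 - ε * p x ≠ 0) :
    ∀ x : ℝ, m x ≠ 0 → s x ≠ 0 →
      ε * z * f x * g x / (1 - ε * p x)
        = (deriv s x + z * n x * (s x)^2 - s x) / (2 * z * m x)
      ∧ ε * z * (g x)^2 / (1 - ε * p x)
        = (deriv s x + z * n x * (s x)^2 - s x)^2 / (4 * z^2 * (m x)^2 * s x) := by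
  intro x hm hsx0
  have hnum : HasDerivAt (fun x => ε * z * (f x)^2)
      (ε * z * (2 * f x * (f x / 2 + z * m x * g x))) x := by
    simpa [mul_comm, mul_assoc, mul_left_comm] using
      (((hf x).pow 2).const_mul (ε * z))
  have hdenom : HasDerivAt (fun x => 1 - ε * p x)
      (-(ε * (-z^2 * n x * (f x)^2))) x := by
    simpa using (((hp x).const_mul ε).const_sub 1)
  have hS : HasDerivAt s
      ((ε * z * (2 * f x * (f x / 2 + z * m x * g x)) * (1 - ε * p x)
        - ε * z * (f x)^2 * (-(ε * (-z^2 * n x * (f x)^2)))) / (1 - ε * p x)^2) x := by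
    rw [hs]
    exact hnum.div hdenom (hden x)
  have hderiv := hS.deriv
  have hsval : s x = ε * z * (f x)^2 / (1 - ε * p x) := by rw [hs]
  have hfε : ε * z * (f x)^2 ≠ 0 := by
    intro h
    apply hsx0
    rw [hsval, h, zero_div]
  have hfne : f x ≠ 0 := by
    intro h; apply hfε; rw [h]; ring
  have hεne : ε ≠ 0 := by
    intro h; apply hfε; rw [h]; ring
  set D := 1 - ε * p x with hDdef
  have hD : D ≠ 0 := hden x
  have hkey : deriv s x + z * n x * (s x)^2 - s x
      = 2 * ε * z^2 * m x * f x * g x / D := by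
    rw [hderiv, hsval]
    field_simp
    ring
  rw [hkey, hsval]
  constructor
  · field_simp
  · field_simp
    ring
end

section
/- Under the hypotheses of the enlarged 2-CH system (spectral equations in x and t plus the pseudo-potential equations for p), the function s = ελf²/(1 - εp) satisfies the second-order equation s_xx = s_x²/(2s) - λ²[(m - 2λσρ²)s²]_x - (λ⁴/2)(m - 2λσρ²)²s³ + 2(1/4 - λm + λ²σρ²)s, wherever s ≠ 0. -/
/-!
Write `f' = g`, `g' = Q f`, `D' = c a f²` and `s = c f² / D`, so that `D' / D = a s`. Then
`s' = u - a s²` with `u = 2 c f g / D`, and `u' = w + 2 Q s - a s u` with `w = 2 c g² / D`.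
The identity `u² = 2 s w` eliminates `f` and `g`: substituting `u = s' + a s²` gives the
second-order equation for `s`. The 2-CH case is `c = ελ`, `D = 1 - εp`, `a = λ² (m - 2λσρ²)`.
-/

section SqDiv

variable {f g D a Q s : ℝ → ℝ} {c : ℝ}

theorem hasDerivAt_sq_div (hf : ∀ x, HasDerivAt f (g x) x)
    (hD : ∀ x, HasDerivAt D (c * a x * f x ^ 2) x) (hD0 : ∀ x, D x ≠ 0)
    (hs : s = fun y => c * f y ^ 2 / D y) (x : ℝ) :
    HasDerivAt s (2 * c * f x * g x / D x - a x * s x ^ 2) x := by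
  have hsq : HasDerivAt (fun y => c * f y ^ 2) (c * (2 * f x * g x)) x := by
    simpa using ((hf x).fun_pow 2).const_mul c
  subst hs
  refine (hsq.fun_div (hD x) (hD0 x)).congr_deriv ?_
  have := hD0 x
  field_simp

theorem hasDerivAt_mul_mul_div (hf : ∀ x, HasDerivAt f (g x) x)
    (hg : ∀ x, HasDerivAt g (Q x * f x) x)
    (hD : ∀ x, HasDerivAt D (c * a x * f x ^ 2) x) (hD0 : ∀ x, D x ≠ 0)
    (hs : s = fun y => c * f y ^ 2 / D y) (x : ℝ) :
    HasDerivAt (fun y => 2 * c * f y * g y / D y)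
      (2 * c * g x ^ 2 / D x + 2 * Q x * s x - a x * s x * (2 * c * f x * g x / D x)) x := by
  have hfg := ((hf x).const_mul (2 * c)).fun_mul (hg x)
  subst hs
  refine (hfg.fun_div (hD x) (hD0 x)).congr_deriv ?_
  have := hD0 x
  field_simp

theorem deriv_deriv_sq_div {x : ℝ} (hf : ∀ x, HasDerivAt f (g x) x)
    (hg : ∀ x, HasDerivAt g (Q x * f x) x) (ha : DifferentiableAt ℝ a x)
    (hD : ∀ x, HasDerivAt D (c * a x * f x ^ 2) x) (hD0 : ∀ x, D x ≠ 0)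
    (hs : s = fun y => c * f y ^ 2 / D y) (hsx : s x ≠ 0) :
    deriv (deriv s) x = deriv s x ^ 2 / (2 * s x) - deriv (fun y => a y * s y ^ 2) x
      - a x ^ 2 / 2 * s x ^ 3 + 2 * Q x * s x := by
  have hs' := hasDerivAt_sq_div hf hD hD0 hs
  have hderiv : deriv s = fun y => 2 * c * f y * g y / D y - a y * s y ^ 2 :=
    funext fun y => (hs' y).deriv
  have has2 : HasDerivAt (fun y => a y * s y ^ 2) (deriv (fun y => a y * s y ^ 2) x) x :=
    (ha.mul ((hs' x).differentiableAt.pow 2)).hasDerivAt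
  rw [hderiv, ((hasDerivAt_mul_mul_div hf hg hD hD0 hs x).fun_sub has2).deriv]
  have hUW : (2 * c * f x * g x / D x) ^ 2 = 2 * s x * (2 * c * g x ^ 2 / D x) := by
    have := hD0 x
    subst hs
    field_simp
  field_simp
  linear_combination (-1 : ℝ) * hUW

end SqDiv

theorem stmt_16_general (f g p m ρ s : ℝ → ℝ) (l sg ε : ℝ)
    (hmdiff : Differentiable ℝ m) (hρdiff : Differentiable ℝ ρ)
    (hf : ∀ x, HasDerivAt f (g x) x)
    (hg : ∀ x, HasDerivAt g ((1/4 - l * m x + l^2 * sg * (ρ x)^2) * f x) x)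
    (hp : ∀ x, HasDerivAt p (-l^3 * (m x - 2*l*sg*(ρ x)^2) * (f x)^2) x)
    (hs : s = fun x => ε * l * (f x)^2 / (1 - ε * p x))
    (hden : ∀ x, 1 - ε * p x ≠ 0) :
    ∀ x : ℝ, s x ≠ 0 →
      deriv (deriv s) x
        = (deriv s x)^2 / (2 * s x)
          - l^2 * deriv (fun y => (m y - 2*l*sg*(ρ y)^2) * (s y)^2) x
          - l^4/2 * (m x - 2*l*sg*(ρ x)^2)^2 * (s x)^3
          + 2 * (1/4 - l * m x + l^2 * sg * (ρ x)^2) * s x := by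
  intro x hsx
  set M := fun y => m y - 2 * l * sg * ρ y ^ 2
  have hMdiff : Differentiable ℝ M := by fun_prop
  have hD : ∀ x, HasDerivAt (fun y => 1 - ε * p y) (ε * l * (l ^ 2 * M x) * f x ^ 2) x :=
    fun x => (((hp x).const_mul ε).const_sub 1).congr_deriv (by ring)
  have hs' := hasDerivAt_sq_div hf hD hden hs
  have hscale : deriv (fun y => l ^ 2 * M y * s y ^ 2) x
      = l ^ 2 * deriv (fun y => M y * s y ^ 2) x := by
    simp only [mul_assoc]
    exact deriv_const_mul _ ((hMdiff x).mul ((hs' x).differentiableAt.pow 2))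
  rw [deriv_deriv_sq_div hf hg ((hMdiff x).const_mul (l ^ 2)) hD hden hs hsx, hscale]
  ring

theorem stmt_16 (f g p m ρ s : ℝ → ℝ) (l sg ε : ℝ)
    (hmdiff : Differentiable ℝ m) (hρdiff : Differentiable ℝ ρ)
    (hf : ∀ x, HasDerivAt f (g x) x)
    (hg : ∀ x, HasDerivAt g ((1/4 - l * m x + l^2 * sg * (ρ x)^2) * f x) x)
    (hp : ∀ x, HasDerivAt p (-l^3 * (m x - 2*l*sg*(ρ x)^2) * (f x)^2) x)
    (hs : s = fun x => ε * l * (f x)^2 / (1 - ε * p x))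
    (hden : ∀ x, 1 - ε * p x ≠ 0) (hfne : ∀ x, f x ≠ 0) :
    ∀ x : ℝ, s x ≠ 0 →
      deriv (deriv s) x
        = (deriv s x)^2 / (2 * s x)
          - l^2 * deriv (fun y => (m y - 2*l*sg*(ρ y)^2) * (s y)^2) x
          - l^4/2 * (m x - 2*l*sg*(ρ x)^2)^2 * (s x)^3
          + 2 * (1/4 - l * m x + l^2 * sg * (ρ x)^2) * s x :=
  stmt_16_general f g p m ρ s l sg ε hmdiff hρdiff hf hg hp hs hden
end

section
/- Under the hypotheses of the enlarged 2-mCH system in the x-variable (f_x = f/2 + zmg, g_x = znf - g/2, p_x = -z²nf²), the function s = εzf²/(1 - εp) satisfies s_xx = s_x²/(2s) - z(ns²)_x + (m_x/m)(s_x + zns² - s) - (z²/2)n²s³ + (2z²mn + 1/2)s, wherever s ≠ 0 and m ≠ 0. -/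
/-! With `w = z m g s / f`, the system gives the first-order equation `s' = s + 2w - z n s²` and,
taking the logarithmic derivative of `w`, `w' = (m'/m - 1 + s'/s - w/s) w + z² m n s`.
Differentiating the first equation once more and eliminating `w = (s' - s + z n s²)/2` leaves
the stated second-order equation, in which `m'/m` enters only through `2w`. -/

namespace EnlargedMCH

variable {f g p m n s : ℝ → ℝ} {z ε x : ℝ}

theorem hasDerivAt_s (hf : HasDerivAt f (f x / 2 + z * m x * g x) x)
    (hp : HasDerivAt p (-z^2 * n x * (f x)^2) x)
    (hs : s = fun x => ε * z * (f x)^2 / (1 - ε * p x))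
    (hden : 1 - ε * p x ≠ 0) :
    HasDerivAt s (s x + 2 * (z * m x * g x * s x / f x) - z * n x * s x ^ 2) x := by
  have hquot : HasDerivAt (fun y => ε * z * f y ^ 2 / (1 - ε * p y)) _ x :=
    ((hf.pow 2).const_mul (ε * z)).div ((hasDerivAt_const x 1).sub (hp.const_mul ε)) hden
  subst hs
  convert hquot using 1
  simp only [Pi.pow_apply]
  field_simp
  ring

theorem hasDerivAt_zmgs_div_f {m' s' : ℝ} (hm : HasDerivAt m m' x)
    (hf : HasDerivAt f (f x / 2 + z * m x * g x) x)
    (hg : HasDerivAt g (z * n x * f x - g x / 2) x) (hs : HasDerivAt s s' x)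
    (hfne : f x ≠ 0) (hmne : m x ≠ 0) (hsne : s x ≠ 0) :
    HasDerivAt (fun y => z * m y * g y * s y / f y)
      ((m' / m x - 1 + s' / s x - z * m x * g x * s x / f x / s x)
          * (z * m x * g x * s x / f x) + z^2 * m x * n x * s x) x := by
  have hquot : HasDerivAt (fun y => z * m y * g y * s y / f y) _ x :=
    (((hm.const_mul z).mul hg).mul hs).div hf hfne
  convert hquot using 1
  simp only [Pi.mul_apply]
  field_simp
  ring

end EnlargedMCH

open EnlargedMCH in
theorem stmt_17 (f g p m n s : ℝ → ℝ) (z ε : ℝ)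
    (hmdiff : Differentiable ℝ m) (hndiff : Differentiable ℝ n)
    (hf : ∀ x, HasDerivAt f (f x / 2 + z * m x * g x) x)
    (hg : ∀ x, HasDerivAt g (z * n x * f x - g x / 2) x)
    (hp : ∀ x, HasDerivAt p (-z^2 * n x * (f x)^2) x)
    (hs : s = fun x => ε * z * (f x)^2 / (1 - ε * p x))
    (hden : ∀ x, 1 - ε * p x ≠ 0) (hfne : ∀ x, f x ≠ 0) :
    ∀ x : ℝ, s x ≠ 0 → m x ≠ 0 →
      deriv (deriv s) x
        = (deriv s x)^2 / (2 * s x)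
          - z * deriv (fun y => n y * (s y)^2) x
          + deriv m x / m x * (deriv s x + z * n x * (s x)^2 - s x)
          - z^2/2 * (n x)^2 * (s x)^3
          + (2 * z^2 * m x * n x + 1/2) * s x := by
  intro x hsne hmne
  have hs' y := hasDerivAt_s (hf y) (hp y) hs (hden y)
  have hw := hasDerivAt_zmgs_div_f (hmdiff x).hasDerivAt (hf x) (hg x) (hs' x) (hfne x) hmne hsne
  have hns : HasDerivAt (fun y => n y * s y ^ 2) _ x := (hndiff x).hasDerivAt.mul ((hs' x).pow 2)
  have hs'' : HasDerivAt (fun y => s y + 2 * (z * m y * g y * s y / f y) - z * n y * s y ^ 2) _ x :=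
    ((hs' x).add (hw.const_mul 2)).sub (((hndiff x).hasDerivAt.const_mul z).mul ((hs' x).pow 2))
  have hfx := hfne x
  rw [(hs' x).deriv, hns.deriv, funext fun y => (hs' y).deriv, hs''.deriv]
  field_simp
  ring
end
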